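/- Let f : ℂ → ℂ be given for |ζ| > R by the convergent series f(ζ) = Σ_{l=0}^∞ f_l/ζ^{l+1}, and let n ∈ ℕ. If (P_n, Q_n) is a pair of polynomials with P_n ≠ 0, deg P_n ≤ n, deg Q_n ≤ n−1, such that P_n(ζ)f(ζ) − Q_n(ζ) = O(1/ζ^{n+1}) as |ζ| → ∞, and if the Hankel determinant H_n = det[(f_{i+j})_{0≤i,j≤n−1}] is nonzero, then deg P_n = n. -/

import Mathlib

/-!
Put `w = ζ⁻¹` and let `d` bound the degrees of `P` and `Q`. Multiplying the asymptotic relation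
by `w ^ d` turns it into an identity of power series converging near `0`,
  `w ^ (d + 1) P(w⁻¹) · ∑ f_l w ^ l - w ^ d Q(w⁻¹) = w ^ (d + n + 1) · ∑ c_l w ^ l`,
whose polynomial factors are the reflections of `P` and `Q`. By uniqueness of power series
expansions the coefficients agree; for `m < n` the coefficient of `w ^ (d + 1 + m)` is
`∑_k p_k f_{m+k}` on the left and `0` on the right. If `deg P < n`, take `d = n - 1`: the
coefficient vector of `P` is then a kernel vector of the invertible Hankel matrix, so `P = 0`.
-/

open Filter Topology Finset
open scoped Polynomial

namespace PowerSeries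

theorem coeff_coe_eq_zero_of_natDegree_lt {R : Type*} [Semiring R] (p : R[X]) {N : ℕ}
    (h : p.natDegree < N) : coeff N (p : R⟦X⟧) = 0 := by
  rw [Polynomial.coeff_coe, Polynomial.coeff_eq_zero_of_natDegree_lt h]

theorem coeff_add_coe_reflect_mul {R : Type*} [CommSemiring R] {p : R[X]} {D : ℕ}
    (hp : p.natDegree ≤ D) (a : ℕ → R) (m : ℕ) :
    coeff (D + m) ((p.reflect D : R⟦X⟧) * mk a) = p.sum fun k b => b * a (m + k) := by
  refine Polynomial.induction_with_natDegree_le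
    (fun p => coeff (D + m) ((p.reflect D : R⟦X⟧) * mk a) = p.sum fun k b => b * a (m + k))
    D (by simp) (fun k b _ hk => ?_) (fun p q _ _ hp hq => ?_) p hp
  · rw [Polynomial.reflect_C_mul_X_pow, Polynomial.revAt_le hk,
      Polynomial.C_mul_X_pow_eq_monomial (n := k),
      Polynomial.sum_monomial_index _ (fun k b => b * a (m + k)) (zero_mul _)]
    simp only [Polynomial.coe_mul, Polynomial.coe_C, Polynomial.coe_pow, Polynomial.coe_X]
    rw [mul_assoc, coeff_C_mul, coeff_X_pow_mul', if_pos (by omega), coeff_mk,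
      show D + m - (D - k) = m + k by omega]
  · rw [Polynomial.reflect_add, Polynomial.coe_add, add_mul, map_add, hp, hq,
      Polynomial.sum_add_index _ _ _ (fun _ => zero_mul _) fun _ _ _ => add_mul _ _ _]

variable {𝕜 : Type*} [NontriviallyNormedField 𝕜]

def SummableNormAt (φ : 𝕜⟦X⟧) (w : 𝕜) : Prop :=
  Summable fun N => ‖coeff N φ * w ^ N‖

noncomputable def sumAt (φ : 𝕜⟦X⟧) (w : 𝕜) : 𝕜 :=
  ∑' N, coeff N φ * w ^ N

theorem summableNormAt_coe (p : 𝕜[X]) (w : 𝕜) : SummableNormAt (p : 𝕜⟦X⟧) w :=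
  summable_of_ne_finset_zero (s := range (p.natDegree + 1)) fun N hN => by
    rw [coeff_coe_eq_zero_of_natDegree_lt p (by simpa using hN), zero_mul, norm_zero]

theorem sumAt_coe (p : 𝕜[X]) (w : 𝕜) : sumAt (p : 𝕜⟦X⟧) w = p.eval w := by
  rw [sumAt, tsum_eq_sum (s := range (p.natDegree + 1)), Polynomial.eval_eq_sum_range]
  · simp only [Polynomial.coeff_coe]
  · intro N hN
    rw [coeff_coe_eq_zero_of_natDegree_lt p (by simpa using hN), zero_mul]

theorem coeff_mul_mul_pow (φ ψ : 𝕜⟦X⟧) (w : 𝕜) (N : ℕ) :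
    coeff N (φ * ψ) * w ^ N =
      ∑ kl ∈ antidiagonal N, coeff kl.1 φ * w ^ kl.1 * (coeff kl.2 ψ * w ^ kl.2) := by
  rw [coeff_mul, sum_mul]
  refine sum_congr rfl fun kl hkl => ?_
  rw [← mem_antidiagonal.mp hkl, pow_add]
  ring

theorem SummableNormAt.mul {φ ψ : 𝕜⟦X⟧} {w : 𝕜} (hφ : SummableNormAt φ w)
    (hψ : SummableNormAt ψ w) : SummableNormAt (φ * ψ) w := by
  simpa only [SummableNormAt, coeff_mul_mul_pow] using
    summable_norm_sum_mul_antidiagonal_of_summable_norm hφ hψ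

theorem sumAt_mul [CompleteSpace 𝕜] {φ ψ : 𝕜⟦X⟧} {w : 𝕜} (hφ : SummableNormAt φ w)
    (hψ : SummableNormAt ψ w) : sumAt (φ * ψ) w = sumAt φ w * sumAt ψ w := by
  simp only [sumAt, coeff_mul_mul_pow,
    tsum_mul_tsum_eq_tsum_sum_antidiagonal_of_summable_norm hφ hψ]

theorem SummableNormAt.sub {φ ψ : 𝕜⟦X⟧} {w : 𝕜} (hφ : SummableNormAt φ w)
    (hψ : SummableNormAt ψ w) : SummableNormAt (φ - ψ) w :=
  (hφ.add hψ).of_nonneg_of_le (fun _ => norm_nonneg _) fun N => by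
    simpa only [map_sub, sub_mul] using norm_sub_le _ _

theorem sumAt_sub [CompleteSpace 𝕜] {φ ψ : 𝕜⟦X⟧} {w : 𝕜} (hφ : SummableNormAt φ w)
    (hψ : SummableNormAt ψ w) : sumAt (φ - ψ) w = sumAt φ w - sumAt ψ w := by
  simp only [sumAt, map_sub, sub_mul]
  exact hφ.of_norm.tsum_sub hψ.of_norm

theorem eventually_summableNormAt_mk {a : ℕ → 𝕜} {M r : ℝ} (ha : ∀ l, ‖a l‖ ≤ M * r ^ l) :
    ∀ᶠ w in 𝓝 0, SummableNormAt (mk a) w := by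
  have hr : 0 < |r| + 1 := by positivity
  filter_upwards [Metric.ball_mem_nhds (0 : 𝕜) (inv_pos.mpr hr)] with w hw
  have hq : |r| * ‖w‖ < 1 := by
    have := mul_lt_mul_of_pos_left (mem_ball_zero_iff.mp hw) hr
    rw [mul_inv_cancel₀ hr.ne'] at this
    nlinarith [norm_nonneg w]
  refine ((summable_geometric_of_lt_one (by positivity) hq).mul_left |M|).of_nonneg_of_le
    (fun _ => norm_nonneg _) fun l => ?_
  rw [coeff_mk, norm_mul, norm_pow, mul_pow, ← mul_assoc, ← abs_pow, ← abs_mul]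
  exact mul_le_mul_of_nonneg_right ((ha l).trans (le_abs_self _)) (by positivity)

theorem eq_zero_of_eventually_sumAt_eq_zero [CompleteSpace 𝕜] {φ : 𝕜⟦X⟧}
    (h : ∀ᶠ w in 𝓝[≠] 0, SummableNormAt φ w ∧ sumAt φ w = 0) : φ = 0 := by
  set p := FormalMultilinearSeries.ofScalars 𝕜 fun N => coeff N φ
  have hsum : p.sum = sumAt φ := funext fun w => FormalMultilinearSeries.ofScalars_sum_eq _ w
  obtain ⟨w₀, ⟨hw₀, -⟩, hw₀0⟩ := (h.and self_mem_nhdsWithin).exists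
  have hrad : 0 < p.radius := by
    refine lt_of_lt_of_le (by simpa using hw₀0) (p.le_radius_of_summable (r := ‖w₀‖₊) ?_)
    simpa [p, SummableNormAt, FormalMultilinearSeries.ofScalars_norm, norm_mul, norm_pow] using hw₀
  have hp := (p.hasFPowerSeriesOnBall hrad).hasFPowerSeriesAt
  -- the hypothesis only covers `w ≠ 0`; analyticity of `p.sum` fills in the centre
  have hzero : p.sum =ᶠ[𝓝 0] 0 := by
    refine hp.analyticAt.frequently_zero_iff_eventually_zero.mp ?_
    rw [hsum]
    exact (h.mono fun w hw => hw.2).frequently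
  have hp0 :=
    (FormalMultilinearSeries.ofScalars_series_eq_zero 𝕜).mp (hp.eq_zero_of_eventually hzero)
  ext N
  simpa using congrFun hp0 N

theorem tsum_div_inv_pow_add (a : ℕ → 𝕜) (w : 𝕜) (k : ℕ) :
    ∑' l, a l / w⁻¹ ^ (l + k) = w ^ k * sumAt (mk a) w := by
  simp only [sumAt, coeff_mk, div_eq_mul_inv, ← inv_pow, inv_inv, ← tsum_mul_left]
  exact tsum_congr fun l => by ring

end PowerSeries

theorem Polynomial.eval_reflect_mul_inv_pow {K : Type*} [Field K] {p : K[X]} {N : ℕ}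
    (hp : p.natDegree ≤ N) {w : K} (hw : w ≠ 0) :
    (p.reflect N).eval w * w⁻¹ ^ N = p.eval w⁻¹ := by
  let := invertibleOfNonzero (inv_ne_zero hw)
  simpa only [invOf_eq_inv, inv_inv, eval₂_id] using
    eval₂_reflect_mul_pow (RingHom.id K) w⁻¹ N p hp

open Polynomial PowerSeries in
theorem Polynomial.sum_mul_shift_eq_zero_of_eventually_eq {𝕜 : Type*}
    [NontriviallyNormedField 𝕜] [CompleteSpace 𝕜] {f c : ℕ → 𝕜} {P Q : 𝕜[X]} {d n : ℕ}
    (hP : P.natDegree ≤ d) (hQ : Q.natDegree ≤ d) (hf : ∀ᶠ w in 𝓝 0, SummableNormAt (mk f) w)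
    (hc : ∀ᶠ w in 𝓝 0, SummableNormAt (mk c) w)
    (hPQ : ∀ᶠ ζ in Bornology.cobounded 𝕜,
      P.eval ζ * ∑' l, f l / ζ ^ (l + 1) - Q.eval ζ = ∑' l, c l / ζ ^ (n + l + 1))
    {m : ℕ} (hm : m < n) : P.sum (fun k a => a * f (m + k)) = 0 := by
  set Φ : 𝕜⟦X⟧ :=
    ↑(P.reflect (d + 1)) * mk f - ↑(Q.reflect d) - ↑(X ^ (d + n + 1) : 𝕜[X]) * mk c
  have hΦ : Φ = 0 := by
    refine eq_zero_of_eventually_sumAt_eq_zero ?_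
    filter_upwards [tendsto_inv₀_nhdsNE_zero.eventually hPQ, nhdsWithin_le_nhds hf,
      nhdsWithin_le_nhds hc, self_mem_nhdsWithin] with w hw hfw hcw (hw0 : w ≠ 0)
    have hsP := (summableNormAt_coe (P.reflect (d + 1)) w).mul hfw
    have hsQ := summableNormAt_coe (Q.reflect d) w
    have hsc := (summableNormAt_coe (X ^ (d + n + 1) : 𝕜[X]) w).mul hcw
    refine ⟨(hsP.sub hsQ).sub hsc, ?_⟩
    rw [sumAt_sub (hsP.sub hsQ) hsc, sumAt_sub hsP hsQ,
      sumAt_mul (summableNormAt_coe _ w) hfw, sumAt_mul (summableNormAt_coe _ w) hcw,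
      sumAt_coe, sumAt_coe, sumAt_coe, eval_pow, eval_X]
    rw [← eval_reflect_mul_inv_pow (N := d + 1) (by omega) hw0,
      ← eval_reflect_mul_inv_pow hQ hw0, tsum_div_inv_pow_add f w 1,
      tsum_congr fun l => by rw [show n + l + 1 = l + (n + 1) by ring],
      tsum_div_inv_pow_add] at hw
    have h₀ : w * w⁻¹ = 1 := mul_inv_cancel₀ hw0
    have h₁ : w ^ d * w⁻¹ ^ d = 1 := by rw [← mul_pow, h₀, one_pow]
    have h₂ : w ^ d * w⁻¹ ^ (d + 1) * w = 1 := by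
      rw [pow_succ]; linear_combination (w * w⁻¹) * h₁ + h₀
    linear_combination w ^ d * hw - eval w (P.reflect (d + 1)) * sumAt (mk f) w * h₂ +
      eval w (Q.reflect d) * h₁
  have hcoeff := congrArg (PowerSeries.coeff (d + 1 + m)) hΦ
  rwa [map_sub, map_sub, coeff_add_coe_reflect_mul (by omega),
    coeff_coe_eq_zero_of_natDegree_lt _ (natDegree_reflect_le.trans_lt (by omega)), coe_pow,
    coe_X, PowerSeries.coeff_X_pow_mul', if_neg (by omega), sub_zero, sub_zero, map_zero]
    at hcoeff

theorem Polynomial.eq_zero_of_hankel_det_ne_zero {R : Type*} [CommRing R] [NoZeroDivisors R]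
    {f : ℕ → R} {n : ℕ} (hH : Matrix.det (fun i j : Fin n => f (i.val + j.val)) ≠ 0)
    {P : R[X]} (hP : P.natDegree < n) (hPf : ∀ m < n, P.sum (fun k a => a * f (m + k)) = 0) :
    P = 0 := by
  have hv : Matrix.mulVec (fun i j : Fin n => f (i.val + j.val)) (fun j => P.coeff j) = 0 := by
    ext i
    rw [Pi.zero_apply, ← hPf i i.isLt,
      sum_over_range' P (f := fun k a => a * f (i + k)) (fun _ => zero_mul _) n hP,
      ← Fin.sum_univ_eq_sum_range (fun k => P.coeff k * f (i + k))]
    simp only [Matrix.mulVec, dotProduct]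
    exact Finset.sum_congr rfl fun j _ => mul_comm (f (i + j)) (P.coeff j)
  have hcoeff := Matrix.eq_zero_of_mulVec_eq_zero hH hv
  ext k
  rw [coeff_zero]
  by_cases hk : k < n
  · exact congrFun hcoeff ⟨k, hk⟩
  · exact coeff_eq_zero_of_natDegree_lt (by omega)

theorem pade_normal_of_hankel_ne_zero_general
    (R C : ℝ)
    (f : ℕ → ℂ) (hf : ∀ l, ‖f l‖ ≤ C * R ^ l)
    (n : ℕ) (P Q : Polynomial ℂ) (hP : P ≠ 0)
    (hdegP : P.natDegree ≤ n) (hdegQ : Q.natDegree ≤ n - 1)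
    (c : ℕ → ℂ) (C' R' : ℝ) (hc : ∀ l, ‖c l‖ ≤ C' * R' ^ l)
    (hAsym : ∀ ζ : ℂ, R < ‖ζ‖ → max R' R < ‖ζ‖ →
      P.eval ζ * (∑' l : ℕ, f l / ζ ^ (l + 1)) - Q.eval ζ = ∑' l : ℕ, c l / ζ ^ (n + l + 1))
    (hHankel : Matrix.det (fun i j : Fin n => f (i.val + j.val)) ≠ 0) :
    P.natDegree = n := by
  by_contra hne
  have hPQ : ∀ᶠ ζ in Bornology.cobounded ℂ,
      P.eval ζ * ∑' l, f l / ζ ^ (l + 1) - Q.eval ζ = ∑' l, c l / ζ ^ (n + l + 1) :=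
    (tendsto_norm_cobounded_atTop.eventually_gt_atTop (max R' R)).mono fun ζ hζ =>
      hAsym ζ ((le_max_right _ _).trans_lt hζ) hζ
  refine hP (Polynomial.eq_zero_of_hankel_det_ne_zero hHankel (by omega) fun m hm => ?_)
  exact Polynomial.sum_mul_shift_eq_zero_of_eventually_eq (by omega) hdegQ
    (PowerSeries.eventually_summableNormAt_mk hf) (PowerSeries.eventually_summableNormAt_mk hc)
    hPQ hm

theorem pade_normal_of_hankel_ne_zero
    (R C : ℝ) (hR : 0 < R) (hC : 0 ≤ C)
    (f : ℕ → ℂ) (hf : ∀ l, ‖f l‖ ≤ C * R ^ l)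
    (n : ℕ) (P Q : Polynomial ℂ) (hP : P ≠ 0)
    (hdegP : P.natDegree ≤ n) (hdegQ : Q.natDegree ≤ n - 1)
    (c : ℕ → ℂ) (C' R' : ℝ) (hc : ∀ l, ‖c l‖ ≤ C' * R' ^ l)
    (hAsym : ∀ ζ : ℂ, R < ‖ζ‖ → max R' R < ‖ζ‖ →
      P.eval ζ * (∑' l : ℕ, f l / ζ ^ (l + 1)) - Q.eval ζ = ∑' l : ℕ, c l / ζ ^ (n + l + 1))
    (hHankel : Matrix.det (fun i j : Fin n => f (i.val + j.val)) ≠ 0) :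
    P.natDegree = n :=
  pade_normal_of_hankel_ne_zero_general R C f hf n P Q hP hdegP hdegQ c C' R' hc hAsym hHankel
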